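/- For any ε > 0 and ρ > e^ε, there is no randomized approval-based committee rule satisfying both ε-DP and ρ-proportional justified representation, assuming n = s·k for some integer s ≥ 1 and m ≥ k+2. -/

import Mathlib

open scoped Classical

noncomputable section

/-- A profile assigns to each of the `n` voters an approval ballot (a finite set of alternatives). -/
abbrev Profile (A : Type) (n : ℕ) := Fin n → Finset A

/-- Two profiles are neighboring if they differ in at most one voter's ballot. -/
def Neighboring {A : Type} {n : ℕ} (P P' : Profile A n) : Prop :=
  ∃ i : Fin n, ∀ j : Fin n, j ≠ i → P j = P' j

/-- `W'` Pareto-dominates `W` in profile `P`. -/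
def ParetoDom {A : Type} [DecidableEq A] {n : ℕ} (P : Profile A n) (W' W : Finset A) : Prop :=
  (∀ i, (W ∩ P i).card ≤ (W' ∩ P i).card) ∧ (∃ i, (W ∩ P i).card < (W' ∩ P i).card)

/-- The set of alternatives approved by every voter in `V`. -/
def commonApproved {A : Type} [Fintype A] {n : ℕ} (P : Profile A n) (V : Finset (Fin n)) :
    Finset A :=
  Finset.univ.filter (fun a => ∀ i ∈ V, a ∈ P i)

/-- `V` is an `ℓ`-cohesive group for `(P, k)`: `|V| ≥ ℓ·n/k` and `|⋂_{i∈V} P i| ≥ ℓ`. -/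
def Cohesive {A : Type} [Fintype A] {n : ℕ} (P : Profile A n) (k ℓ : ℕ)
    (V : Finset (Fin n)) : Prop :=
  ℓ * n ≤ V.card * k ∧ ℓ ≤ (commonApproved P V).card

/-- Committee `W` (of size `k`) satisfies justified representation for `(P, k)`. -/
def JRsat {A : Type} [Fintype A] [DecidableEq A] {n : ℕ} (P : Profile A n) (k : ℕ)
    (W : Finset A) : Prop :=
  W.card = k ∧ ∀ V : Finset (Fin n), Cohesive P k 1 V → ∃ i ∈ V, (P i ∩ W).Nonempty

/-- Committee `W` satisfies proportional justified representation for `(P, k)`. -/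
def PJRsat {A : Type} [Fintype A] [DecidableEq A] {n : ℕ} (P : Profile A n) (k : ℕ)
    (W : Finset A) : Prop :=
  W.card = k ∧ ∀ (ℓ : ℕ) (V : Finset (Fin n)), 1 ≤ ℓ → Cohesive P k ℓ V →
    ℓ ≤ (W ∩ V.biUnion P).card

/-- Committee `W` satisfies extended justified representation for `(P, k)`. -/
def EJRsat {A : Type} [Fintype A] [DecidableEq A] {n : ℕ} (P : Profile A n) (k : ℕ)
    (W : Finset A) : Prop :=
  W.card = k ∧ ∀ (ℓ : ℕ) (V : Finset (Fin n)), 1 ≤ ℓ → Cohesive P k ℓ V →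
    ∃ i ∈ V, ℓ ≤ (P i ∩ W).card

/-- `W` is a Condorcet committee for `(P, k)`: against every other size-`k` committee,
strictly more than half of the voters prefer `W`. -/
def CondorcetCommittee {A : Type} [Fintype A] [DecidableEq A] {n : ℕ} (P : Profile A n)
    (k : ℕ) (W : Finset A) : Prop :=
  W.card = k ∧ ∀ W' : Finset A, W'.card = k → W' ≠ W →
    n < 2 * (Finset.univ.filter
      (fun i : Fin n => (P i ∩ W').card < (P i ∩ W).card)).card

/-- A randomized approval-based committee (ABC) rule: for each profile and committee size `k`,
a probability distribution over the size-`k` committees. -/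
structure ABCRule (A : Type) [Fintype A] [DecidableEq A] (n : ℕ) where
  prob : Profile A n → ℕ → Finset A → ℝ
  nonneg : ∀ P k W, 0 ≤ prob P k W
  size_eq : ∀ P k W, prob P k W ≠ 0 → W.card = k
  sum_one : ∀ P k, k ≤ Fintype.card A →
    ∑ W ∈ Finset.univ.filter (fun W : Finset A => W.card = k), prob P k W = 1

variable {A : Type} [Fintype A] [DecidableEq A] {n : ℕ}

/-- ε-differential privacy at committee size `k`. -/
def DPAt (f : ABCRule A n) (k : ℕ) (ε : ℝ) : Prop :=
  ∀ (P P' : Profile A n) (W : Finset A),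
    Neighboring P P' → f.prob P k W ≤ Real.exp ε * f.prob P' k W

/-- ε-differential privacy: single-ballot changes alter each committee's winning
probability by a factor of at most `e^ε`. -/
def DP (f : ABCRule A n) (ε : ℝ) : Prop := ∀ k : ℕ, DPAt f k ε

/-- Neutrality: the rule commutes with permutations of the alternatives. -/
def Neutral (f : ABCRule A n) : Prop :=
  ∀ (σ : Equiv.Perm A) (P : Profile A n) (k : ℕ) (W : Finset A),
    f.prob (fun i => (P i).image σ) k (W.image σ) = f.prob P k W

/-- θ-JR: each JR committee wins with probability at least θ times that of each non-JR one. -/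
def ThetaJR (f : ABCRule A n) (θ : ℝ) : Prop :=
  ∀ (P : Profile A n) (k : ℕ) (W₁ W₂ : Finset A),
    JRsat P k W₁ → W₂.card = k → ¬ JRsat P k W₂ →
      θ * f.prob P k W₂ ≤ f.prob P k W₁

/-- ρ-PJR. -/
def RhoPJR (f : ABCRule A n) (ρ : ℝ) : Prop :=
  ∀ (P : Profile A n) (k : ℕ) (W₁ W₂ : Finset A),
    PJRsat P k W₁ → W₂.card = k → ¬ PJRsat P k W₂ →
      ρ * f.prob P k W₂ ≤ f.prob P k W₁

/-- κ-EJR. -/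
def KappaEJR (f : ABCRule A n) (κ : ℝ) : Prop :=
  ∀ (P : Profile A n) (k : ℕ) (W₁ W₂ : Finset A),
    EJRsat P k W₁ → W₂.card = k → ¬ EJRsat P k W₂ →
      κ * f.prob P k W₂ ≤ f.prob P k W₁

/-- Exact Condorcet criterion: whenever a Condorcet committee exists, it wins with
probability one. -/
def CondorcetCrit (f : ABCRule A n) : Prop :=
  ∀ (P : Profile A n) (k : ℕ) (W : Finset A),
    CondorcetCommittee P k W → f.prob P k W = 1

/-- η-Condorcet criterion. -/
def EtaCC (f : ABCRule A n) (η : ℝ) : Prop :=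
  ∀ (P : Profile A n) (k : ℕ) (Wc W : Finset A),
    CondorcetCommittee P k Wc → W.card = k → W ≠ Wc →
      η * f.prob P k W ≤ f.prob P k Wc

/-- Exact Pareto efficiency at committee size `k`: no committee in the support is
Pareto-dominated by another size-`k` committee. -/
def ParetoEffAt (f : ABCRule A n) (k : ℕ) : Prop :=
  ∀ (P : Profile A n) (W : Finset A), f.prob P k W ≠ 0 →
    ∀ W' : Finset A, W'.card = k → ¬ ParetoDom P W' W

/-- β-Pareto efficiency at committee size `k`. -/
def BetaPEAt (f : ABCRule A n) (k : ℕ) (β : ℝ) : Prop :=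
  ∀ (P : Profile A n) (W₁ W₂ : Finset A), W₁.card = k → W₂.card = k →
    ParetoDom P W₁ W₂ → β * f.prob P k W₂ ≤ f.prob P k W₁

/-- The approval voting score of a committee. -/
def AV (P : Profile A n) (W : Finset A) : ℕ := ∑ j, (P j ∩ W).card

/-- The set of size-`k` committees satisfying JR for `(P, k)`. -/
def JRset (P : Profile A n) (k : ℕ) : Finset (Finset A) :=
  Finset.univ.filter (fun W => JRsat P k W)

end

/-!
If `W` has positive probability at some profile, then by differential privacy it has positive
probability at every profile. Fix an alternative `a ∈ W` and two alternatives `b, c ∉ W`, put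
`Y = W \ {a}` and `Z = Y ∪ {c}`, and let all voters approve `Z` except one voter `v`, who approves
`Z ∪ {a}` (profile `P`) or `Z ∪ {b}` (profile `Q`). The grand coalition is `k`-cohesive, so PJR
asks that the whole committee lie in the ballot union; hence `W = Y ∪ {a}` is PJR in `P` but not
in `Q`, and `W' = Y ∪ {b}` is PJR in `Q` but not in `P`. Going around the cycle
`Q, W ↦ Q, W' ↦ P, W' ↦ P, W ↦ Q, W` gains a factor `ρ` at each PJR step and loses at most `e^ε`
at each DP step, so `ρ² · Pr[Q, W] ≤ e^{2ε} · Pr[Q, W]`, forcing `Pr[Q, W] = 0`.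
-/

open Finset

theorem Neighboring.symm {A : Type} {n : ℕ} {P Q : Profile A n} (h : Neighboring P Q) :
    Neighboring Q P :=
  let ⟨i, hi⟩ := h
  ⟨i, fun j hj => (hi j hj).symm⟩

namespace ABCRule

variable {A : Type} [Fintype A] [DecidableEq A] {n : ℕ} (f : ABCRule A n) {k : ℕ} {ε : ℝ}

theorem exists_prob_ne_zero (P : Profile A n) (hk : k ≤ Fintype.card A) :
    ∃ W, f.prob P k W ≠ 0 := by
  by_contra! h
  simpa [h] using f.sum_one P k hk

theorem prob_eq_zero_of_neighboring (hdp : DPAt f k ε) {P Q : Profile A n} {W : Finset A}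
    (hPQ : Neighboring P Q) (hQ : f.prob Q k W = 0) : f.prob P k W = 0 :=
  le_antisymm (by simpa [hQ] using hdp P Q W hPQ) (f.nonneg P k W)

theorem prob_eq_zero_of_dpAt (hdp : DPAt f k ε) {P Q : Profile A n} {W : Finset A}
    (hQ : f.prob Q k W = 0) : f.prob P k W = 0 := by
  have hswitch : ∀ S : Finset (Fin n), f.prob (fun j => if j ∈ S then P j else Q j) k W = 0 := by
    intro S
    induction S using Finset.induction_on with
    | empty => simpa using hQ
    | insert i S _ ih =>
      refine f.prob_eq_zero_of_neighboring hdp ⟨i, fun j hj => ?_⟩ ih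
      simp [hj]
  simpa using hswitch univ

theorem prob_eq_zero_of_pjr_swap {ρ : ℝ} (hdp : DPAt f k ε) (hpjr : RhoPJR f ρ)
    (hρ : Real.exp ε < ρ) {P Q : Profile A n} {W₁ W₂ : Finset A} (hPQ : Neighboring P Q)
    (hP₁ : PJRsat P k W₁) (hP₂ : ¬ PJRsat P k W₂)
    (hQ₂ : PJRsat Q k W₂) (hQ₁ : ¬ PJRsat Q k W₁) :
    f.prob Q k W₁ = 0 := by
  set E := Real.exp ε
  have hE : 0 < E := Real.exp_pos ε
  have hρ0 : 0 < ρ := hE.trans hρ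
  have hcycle : ρ * (ρ * f.prob Q k W₁) ≤ E * (E * f.prob Q k W₁) :=
    calc ρ * (ρ * f.prob Q k W₁)
        ≤ ρ * f.prob Q k W₂ := by gcongr; exact hpjr Q k W₂ W₁ hQ₂ hP₁.1 hQ₁
      _ ≤ ρ * (E * f.prob P k W₂) := by gcongr; exact hdp Q P W₂ hPQ.symm
      _ = E * (ρ * f.prob P k W₂) := by ring
      _ ≤ E * f.prob P k W₁ := by gcongr; exact hpjr P k W₁ W₂ hP₁ hQ₂.1 hP₂
      _ ≤ E * (E * f.prob Q k W₁) := by gcongr; exact hdp P Q W₁ hPQ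
  have hnonneg := f.nonneg Q k W₁
  nlinarith [mul_lt_mul'' hρ hρ hE.le hE.le]

end ABCRule

section Cohesive

variable {A : Type} [Fintype A] {n : ℕ}

theorem Cohesive.le {P : Profile A n} {k ℓ : ℕ} {V : Finset (Fin n)} (h : Cohesive P k ℓ V)
    (hn : 0 < n) : ℓ ≤ k := by
  have hV : V.card ≤ n := by simpa using V.card_le_univ
  have : ℓ * n ≤ k * n := h.1.trans (by rw [mul_comm k]; exact Nat.mul_le_mul_right k hV)
  exact Nat.le_of_mul_le_mul_right this hn

theorem Cohesive.lt_of_card_lt {P : Profile A n} {k ℓ : ℕ} {V : Finset (Fin n)}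
    (h : Cohesive P k ℓ V) (hk : 0 < k) (hV : V.card < n) : ℓ < k := by
  have : ℓ * n < k * n := h.1.trans_lt (by rw [mul_comm k]; exact Nat.mul_lt_mul_of_pos_right hV hk)
  exact Nat.lt_of_mul_lt_mul_right this

end Cohesive

section extraApproval

variable {A : Type} [DecidableEq A] {n : ℕ}

def extraApproval (Z : Finset A) (v : Fin n) (x : A) : Profile A n :=
  Function.update (fun _ => Z) v (insert x Z)

variable {Z : Finset A} {v : Fin n} {x : A}

theorem neighboring_extraApproval (y : A) :
    Neighboring (extraApproval Z v x) (extraApproval Z v y) :=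
  ⟨v, fun j hj => by simp [extraApproval, hj]⟩

theorem subset_extraApproval (i : Fin n) : Z ⊆ extraApproval Z v x i := by
  by_cases hi : i = v <;> simp [extraApproval, hi, subset_insert]

theorem biUnion_extraApproval_subset (V : Finset (Fin n)) :
    V.biUnion (extraApproval Z v x) ⊆ insert x Z :=
  biUnion_subset.2 fun i _ => by
    by_cases hi : i = v <;> simp [extraApproval, hi, subset_insert]

variable [Fintype A]

theorem pjrSat_extraApproval (hn : 0 < n) {Y : Finset A} {k : ℕ} (hYZ : Y ⊆ Z)
    (hY : Y.card + 1 = k) (hx : x ∉ Y) : PJRsat (extraApproval Z v x) k (insert x Y) := by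
  refine ⟨by rw [card_insert_of_notMem hx, hY], fun ℓ V hℓ hV => ?_⟩
  by_cases hv : v ∈ V
  · have hsub : insert x Y ⊆ V.biUnion (extraApproval Z v x) := fun y hy =>
      mem_biUnion.2 ⟨v, hv, by simpa [extraApproval] using insert_subset_insert x hYZ hy⟩
    rw [inter_eq_left.2 hsub, card_insert_of_notMem hx, hY]
    exact hV.le hn
  · have hVn : V.card < n := by
      simpa using card_lt_card (ssubset_univ_iff.2 fun h : V = univ => hv (h ▸ mem_univ v))
    have hℓY : ℓ ≤ Y.card := by have := hV.lt_of_card_lt (by omega) hVn; omega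
    obtain ⟨i, hi⟩ : V.Nonempty := card_pos.1 (by nlinarith [hV.1])
    have hsub : Y ⊆ insert x Y ∩ V.biUnion (extraApproval Z v x) := fun y hy =>
      mem_inter.2 ⟨mem_insert_of_mem hy,
        mem_biUnion.2 ⟨i, hi, subset_extraApproval i (hYZ hy)⟩⟩
    exact hℓY.trans (card_le_card hsub)

theorem not_pjrSat_extraApproval {k : ℕ} (hk : 0 < k) (hZ : Z.card = k) {U : Finset A} {u : A}
    (hu : u ∈ U) (hux : u ∉ insert x Z) : ¬ PJRsat (extraApproval Z v x) k U := by
  rintro ⟨hU, hpjr⟩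
  -- the grand coalition is `k`-cohesive, so PJR would force `U ⊆ insert x Z`
  have hcoh : Cohesive (extraApproval Z v x) k k univ :=
    ⟨by simp [mul_comm], hZ ▸ card_le_card fun z hz => by
      simpa [commonApproved] using fun i => subset_extraApproval i hz⟩
  have hsub : U ∩ univ.biUnion (extraApproval Z v x) ⊂ U :=
    ssubset_of_subset_of_ne inter_subset_left fun h =>
      hux (biUnion_extraApproval_subset univ (mem_inter.1 (h ▸ hu)).2)
  have := card_lt_card hsub
  have := hpjr k univ hk hcoh
  omega

end extraApproval

variable {A : Type} [Fintype A] [DecidableEq A] {n : ℕ}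

theorem exists_neighboring_pjr_swap (hn : 0 < n) {k : ℕ} {W : Finset A} (hW : W.card = k)
    (hk : 0 < k) (hm : k + 2 ≤ Fintype.card A) :
    ∃ (P Q : Profile A n) (W' : Finset A), Neighboring P Q ∧
      PJRsat P k W ∧ ¬ PJRsat P k W' ∧ PJRsat Q k W' ∧ ¬ PJRsat Q k W := by
  obtain ⟨a, ha⟩ := card_pos.1 (hW ▸ hk)
  obtain ⟨b, hb, c, hc, hbc⟩ := one_lt_card.1 (by rw [card_compl, hW]; omega : 1 < Wᶜ.card)
  rw [mem_compl] at hb hc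
  set Y := W.erase a
  have hY : Y.card + 1 = k := hW ▸ card_erase_add_one ha
  have haY : a ∉ Y := notMem_erase a W
  have hbY : b ∉ Y := fun h => hb (mem_of_mem_erase h)
  have hcY : c ∉ Y := fun h => hc (mem_of_mem_erase h)
  have hZ : (insert c Y).card = k := by rw [card_insert_of_notMem hcY, hY]
  have hYZ : Y ⊆ insert c Y := subset_insert c Y
  obtain ⟨v⟩ : Nonempty (Fin n) := ⟨⟨0, hn⟩⟩
  refine ⟨extraApproval (insert c Y) v a, extraApproval (insert c Y) v b, insert b Y,
    neighboring_extraApproval b, ?_,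
    not_pjrSat_extraApproval hk hZ (mem_insert_self b Y) ?_,
    pjrSat_extraApproval hn hYZ hY hbY, not_pjrSat_extraApproval hk hZ ha ?_⟩
  · simpa [Y, insert_erase ha] using pjrSat_extraApproval (v := v) hn hYZ hY haY
  · simp only [mem_insert, not_or]
    exact ⟨fun h => hb (h ▸ ha), hbc, hbY⟩
  · simp only [mem_insert, not_or]
    exact ⟨fun h => hb (h ▸ ha), fun h => hc (h ▸ ha), haY⟩

theorem dp_rhoPJR_upper_general (f : ABCRule A n) (ε ρ : ℝ)
    (hρ : Real.exp ε < ρ) (k s : ℕ) (hk : 0 < k) (hs : 1 ≤ s) (hn : n = s * k)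
    (hm : k + 2 ≤ Fintype.card A) :
    ¬ (DP f ε ∧ RhoPJR f ρ) := by
  rintro ⟨hdp, hpjr⟩
  have hn0 : 0 < n := hn ▸ Nat.mul_pos hs hk
  obtain ⟨W, hW⟩ := f.exists_prob_ne_zero (fun _ => ∅) (by omega : k ≤ Fintype.card A)
  obtain ⟨P, Q, W', hPQ, hP, hP', hQ', hQ⟩ :=
    exists_neighboring_pjr_swap hn0 (f.size_eq _ _ _ hW) hk hm
  exact hW <| f.prob_eq_zero_of_dpAt (hdp k) <|
    f.prob_eq_zero_of_pjr_swap (hdp k) hpjr hρ hPQ hP hP' hQ' hQ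

/-- For ε > 0 and ρ > e^ε, no ABC rule satisfies both ε-DP and ρ-PJR
(assuming n = s·k for some s ≥ 1 and m ≥ k+2). -/
theorem dp_rhoPJR_upper (f : ABCRule A n) (ε ρ : ℝ) (hε : 0 < ε)
    (hρ : Real.exp ε < ρ) (k s : ℕ) (hk : 0 < k) (hs : 1 ≤ s) (hn : n = s * k)
    (hm : k + 2 ≤ Fintype.card A) :
    ¬ (DP f ε ∧ RhoPJR f ρ) :=
  dp_rhoPJR_upper_general f ε ρ hρ k s hk hs hn hm
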